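/- arXiv:2509.07657 — 2 statements merged into one kernel-verified Lean document; each statement's English description precedes it below -/
import Mathlib

section
/- Let r ≥ 1 and C > 0. There exists a constant C' > 0, depending only on C, such that for every integer n ≥ 2, every probability space (Ω, μ), and every finite collection Z₁,…,Z_n of nonnegative random variables on Ω satisfying ‖max_{1≤k≤n} Z_k‖_{L^r} ≤ C n^{−1/2}, one has ‖max_{1≤k≤n} ω₁(Z_k)‖_{L^r} ≤ C' n^{−1/2} log n. -/
open MeasureTheory

/-- `ℓ(t) = -log t` for `0 < t ≤ 1/3` and `ℓ(t) = log 3` for `t ≥ 1/3`. -/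
noncomputable def ell (t : ℝ) : ℝ := if t ≤ 1/3 then -Real.log t else Real.log 3

/-- `ω_q(t) = (t ℓ(t))^q` for `t > 0` and `ω_q(0) = 0`. -/
noncomputable def omegaQ (q t : ℝ) : ℝ := if t = 0 then 0 else (t * ell t) ^ q

/-!
For `t ≥ 0` and `n ≥ 1` one has `ω₁(t) ≤ (log 3 + log n) t + 1/n`: for `t ≥ 1/3` this is clear,
and for `t ≤ 1/3` write `-t log t = t log n - t log (n t)` and use `-x log x ≤ 1 - x` at `x = n t`.
Taking maxima over `k`, `max_k ω₁(Z_k) ≤ (log 3 + log n) max_k Z_k + 1/n`, so Minkowski's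
inequality in `L^r` gives the bound with `C' = 3C + 2`, since `log 3 + log n ≤ 3 log n` and
`1/n ≤ 2 n^{-1/2} log n`.

The Bochner integral of a non-integrable function is `0`, so the hypothesis only carries
information when `max_k Z_k ∈ L^r`. This holds whenever the left-hand side is not trivially `0`,
i.e. when `max_k ω₁(Z_k) ∈ L^r`, because `t ≤ ω₁(t) / log 3 + 1/3`.
-/

open Real

lemma omegaQ_one_eq_mul_ell (t : ℝ) : omegaQ 1 t = t * ell t := by
  unfold omegaQ
  split_ifs with h
  · simp [h]
  · exact rpow_one _

lemma ell_nonneg {t : ℝ} (ht : 0 ≤ t) : 0 ≤ ell t := by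
  unfold ell
  split_ifs with h
  · exact neg_nonneg.mpr (log_nonpos ht (by linarith))
  · exact log_nonneg (by norm_num)

lemma omegaQ_one_nonneg {t : ℝ} (ht : 0 ≤ t) : 0 ≤ omegaQ 1 t := by
  rw [omegaQ_one_eq_mul_ell]
  exact mul_nonneg ht (ell_nonneg ht)

lemma measurable_ell : Measurable ell :=
  Measurable.ite (measurableSet_le measurable_id measurable_const) measurable_log.neg
    measurable_const

lemma measurable_omegaQ_one : Measurable (omegaQ 1) := by
  rw [show omegaQ 1 = fun t => t * ell t from funext omegaQ_one_eq_mul_ell]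
  exact measurable_id.mul measurable_ell

lemma neg_mul_log_le_mul_log_add_inv {s t : ℝ} (hs : 0 < s) (ht : 0 ≤ t) :
    -(t * log t) ≤ t * log s + s⁻¹ := by
  rcases ht.eq_or_lt with rfl | ht
  · simp [hs.le]
  have h := negMulLog_le_one_sub_self (mul_nonneg hs.le ht.le)
  rw [negMulLog, log_mul hs.ne' ht.ne'] at h
  have : s * -(t * log t) ≤ s * (t * log s + s⁻¹) := by
    rw [mul_add, mul_inv_cancel₀ hs.ne']
    nlinarith
  exact le_of_mul_le_mul_left this hs

lemma omegaQ_one_le_mul_add {s t : ℝ} (hs : 1 ≤ s) (ht : 0 ≤ t) :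
    omegaQ 1 t ≤ (log 3 + log s) * t + s⁻¹ := by
  have hlog3 : 0 ≤ log 3 := log_nonneg (by norm_num)
  have hlogs : 0 ≤ log s := log_nonneg hs
  have hinv : 0 ≤ s⁻¹ := by positivity
  rw [omegaQ_one_eq_mul_ell, ell]
  split_ifs
  · nlinarith [neg_mul_log_le_mul_log_add_inv (s := s) (by linarith) ht]
  · nlinarith

lemma le_inv_log_three_mul_omegaQ_one_add {t : ℝ} (ht : 0 ≤ t) :
    t ≤ (log 3)⁻¹ * omegaQ 1 t + 3⁻¹ := by
  have hlog3 : 0 < log 3 := log_pos (by norm_num)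
  by_cases h : t ≤ 1/3
  · have := mul_nonneg (inv_nonneg.mpr hlog3.le) (omegaQ_one_nonneg ht)
    linarith
  · rw [omegaQ_one_eq_mul_ell, ell, if_neg h, mul_comm t, ← mul_assoc,
      inv_mul_cancel₀ hlog3.ne']
    linarith

namespace Real

variable {ι : Type*} {s : Finset ι} {f g : ι → ℝ}

lemma le_biSup_of_mem {k : ι} (hk : k ∈ s) : f k ≤ ⨆ j ∈ s, f j := by
  refine le_ciSup₂ (f := fun j (_ : j ∈ s) => f j) ?_ k hk
  refine (s.finite_toSet.image f).bddAbove.mono ?_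
  rintro _ ⟨_, ⟨j, rfl⟩, hj, rfl⟩
  exact ⟨j, hj, rfl⟩

lemma biSup_le {a : ℝ} (ha : 0 ≤ a) (h : ∀ k ∈ s, f k ≤ a) : ⨆ k ∈ s, f k ≤ a :=
  Real.iSup_le (fun k => Real.iSup_le (h k) ha) ha

lemma biSup_nonneg (h : ∀ k ∈ s, 0 ≤ f k) : 0 ≤ ⨆ k ∈ s, f k :=
  Real.iSup_nonneg fun k => Real.iSup_nonneg (h k)

lemma biSup_le_mul_biSup_add {a b : ℝ} (ha : 0 ≤ a) (hb : 0 ≤ b) (hg : ∀ k ∈ s, 0 ≤ g k)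
    (hfg : ∀ k ∈ s, f k ≤ a * g k + b) : ⨆ k ∈ s, f k ≤ a * (⨆ k ∈ s, g k) + b := by
  refine biSup_le (add_nonneg (mul_nonneg ha (biSup_nonneg hg)) hb) fun k hk => ?_
  exact (hfg k hk).trans (by gcongr; exact le_biSup_of_mem hk)

end Real

section Lp

variable {Ω : Type*} [MeasurableSpace Ω] {μ : Measure Ω} {f g : Ω → ℝ} {r a b : ℝ}

lemma memLp_ofReal_iff_integrable_rpow (hr : 0 < r) (hf : AEStronglyMeasurable f μ)
    (hf0 : 0 ≤ f) : MemLp f (ENNReal.ofReal r) μ ↔ Integrable (fun ω => f ω ^ r) μ := by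
  rw [← integrable_norm_rpow_iff hf (by simpa using hr) ENNReal.ofReal_ne_top,
    ENNReal.toReal_ofReal hr.le]
  simp only [norm_of_nonneg (hf0 _)]

lemma integral_rpow_rpow_one_div_eq_toReal_eLpNorm (hr : 0 < r) (hf0 : 0 ≤ f)
    (hf : MemLp f (ENNReal.ofReal r) μ) :
    (∫ ω, f ω ^ r ∂μ) ^ (1 / r) = (eLpNorm f (ENNReal.ofReal r) μ).toReal := by
  rw [hf.eLpNorm_eq_integral_rpow_norm (by simpa using hr) ENNReal.ofReal_ne_top,
    ENNReal.toReal_ofReal hr.le, ENNReal.toReal_ofReal (by positivity), one_div]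
  simp only [norm_of_nonneg (hf0 _)]

lemma MeasureTheory.MemLp.of_le_mul_add {p : ENNReal} [IsFiniteMeasure μ] (hg : MemLp g p μ)
    (hf : AEStronglyMeasurable f μ) (hfg : ∀ ω, ‖f ω‖ ≤ a * g ω + b) : MemLp f p μ :=
  ((hg.const_mul a).add (memLp_const b)).mono' hf (ae_of_all _ hfg)

lemma eLpNorm_le_mul_eLpNorm_add {p : ENNReal} [IsProbabilityMeasure μ] (hp : 1 ≤ p)
    (hg : AEStronglyMeasurable g μ) (hfg : ∀ ω, ‖f ω‖ ≤ a * g ω + b) :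
    eLpNorm f p μ ≤ ‖a‖ₑ * eLpNorm g p μ + ‖b‖ₑ :=
  calc eLpNorm f p μ ≤ eLpNorm (fun ω => a * g ω + b) p μ := eLpNorm_mono_real hfg
    _ ≤ eLpNorm (a • g) p μ + eLpNorm (fun _ => b) p μ :=
      eLpNorm_add_le (hg.const_smul a) aestronglyMeasurable_const hp
    _ = ‖a‖ₑ * eLpNorm g p μ + ‖b‖ₑ := by
      rw [eLpNorm_const_smul, eLpNorm_const _ (zero_lt_one.trans_le hp).ne' (NeZero.ne μ),
        measure_univ, ENNReal.one_rpow, mul_one]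

lemma integral_rpow_rpow_one_div_le_mul_add [IsProbabilityMeasure μ] (hr : 1 ≤ r)
    (hf : AEStronglyMeasurable f μ) (hf0 : 0 ≤ f) (hg : MemLp g (ENNReal.ofReal r) μ)
    (hg0 : 0 ≤ g) (ha : 0 ≤ a) (hb : 0 ≤ b) (hfg : ∀ ω, f ω ≤ a * g ω + b) :
    (∫ ω, f ω ^ r ∂μ) ^ (1 / r) ≤ a * (∫ ω, g ω ^ r ∂μ) ^ (1 / r) + b := by
  have hr0 : 0 < r := by linarith
  have hfg' : ∀ ω, ‖f ω‖ ≤ a * g ω + b := fun ω => by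
    rw [norm_of_nonneg (hf0 ω)]; exact hfg ω
  rw [integral_rpow_rpow_one_div_eq_toReal_eLpNorm hr0 hf0 (hg.of_le_mul_add hf hfg'),
    integral_rpow_rpow_one_div_eq_toReal_eLpNorm hr0 hg0 hg]
  have h := eLpNorm_le_mul_eLpNorm_add (ENNReal.one_le_ofReal.mpr hr) hg.1 hfg'
  have hfin : ‖a‖ₑ * eLpNorm g (ENNReal.ofReal r) μ + ‖b‖ₑ ≠ ⊤ := by
    finiteness [hg.eLpNorm_ne_top]
  refine (ENNReal.toReal_mono hfin h).trans_eq ?_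
  rw [ENNReal.toReal_add (by finiteness [hg.eLpNorm_ne_top]) enorm_ne_top, ENNReal.toReal_mul]
  simp [abs_of_nonneg ha, abs_of_nonneg hb]

end Lp

lemma log_three_add_log_le {n : ℕ} (hn : 2 ≤ n) : log 3 + log n ≤ 3 * log n := by
  have : log 3 ≤ log ((n : ℝ) ^ 2) := log_le_log (by norm_num) (by norm_cast; nlinarith)
  rw [log_pow] at this
  push_cast at this
  linarith

lemma inv_le_two_mul_rpow_neg_half_mul_log {n : ℕ} (hn : 2 ≤ n) :
    (n : ℝ)⁻¹ ≤ 2 * (n : ℝ) ^ (-(1 : ℝ) / 2) * log n := by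
  have hn1 : (1 : ℝ) ≤ n := by norm_cast; omega
  have hinv : (n : ℝ)⁻¹ ≤ (n : ℝ) ^ (-(1 : ℝ) / 2) := by
    rw [← rpow_neg_one]
    exact rpow_le_rpow_of_exponent_le hn1 (by norm_num)
  have hlog : 1 ≤ 2 * log n := by
    have := log_le_log (by norm_num) (show (2 : ℝ) ≤ n by exact_mod_cast hn)
    linarith [log_two_gt_d9]
  nlinarith [rpow_nonneg (zero_le_one.trans hn1) (-(1 : ℝ) / 2)]

/-- Let `r ≥ 1` and `C > 0`. There exists `C' > 0` depending only on `C` such that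
for every `n ≥ 2`, every probability space `(Ω, μ)` and all nonnegative random variables
`Z₁, …, Z_n` with `‖max_{1≤k≤n} Z_k‖_{L^r} ≤ C n^{-1/2}`, one has
`‖max_{1≤k≤n} ω₁(Z_k)‖_{L^r} ≤ C' n^{-1/2} log n`. -/
theorem omegaQ_one_max_Lr_bound (r C : ℝ) (hr : 1 ≤ r) (hC : 0 < C) :
    ∃ C' : ℝ, 0 < C' ∧
      ∀ (n : ℕ), 2 ≤ n →
        ∀ (Ω : Type) (_ : MeasurableSpace Ω) (μ : Measure Ω), IsProbabilityMeasure μ →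
          ∀ Z : ℕ → Ω → ℝ, (∀ k, Measurable (Z k)) → (∀ k ω, 0 ≤ Z k ω) →
            (∫ ω, (⨆ k ∈ Finset.Icc 1 n, Z k ω) ^ r ∂μ) ^ (1/r) ≤ C * (n:ℝ) ^ (-(1:ℝ)/2) →
            (∫ ω, (⨆ k ∈ Finset.Icc 1 n, omegaQ 1 (Z k ω)) ^ r ∂μ) ^ (1/r)
              ≤ C' * (n:ℝ) ^ (-(1:ℝ)/2) * Real.log n := by
  refine ⟨3 * C + 2, by positivity, fun n hn Ω _ μ _ Z hZm hZ0 hbound => ?_⟩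
  set S := fun ω => ⨆ k ∈ Finset.Icc 1 n, Z k ω
  set T := fun ω => ⨆ k ∈ Finset.Icc 1 n, omegaQ 1 (Z k ω)
  have hS0 : 0 ≤ S := fun ω => biSup_nonneg fun k _ => hZ0 k ω
  have hT0 : 0 ≤ T := fun ω => biSup_nonneg fun k _ => omegaQ_one_nonneg (hZ0 k ω)
  have hSm : Measurable S := Measurable.iSup fun k => Measurable.iSup_Prop _ (hZm k)
  have hTm : Measurable T :=
    Measurable.iSup fun k => Measurable.iSup_Prop _ (measurable_omegaQ_one.comp (hZm k))
  by_cases hT : MemLp T (ENNReal.ofReal r) μ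
  swap
  · rw [integral_undef (mt (memLp_ofReal_iff_integrable_rpow (by linarith)
      hTm.aestronglyMeasurable hT0).mpr hT), zero_rpow (by positivity)]
    positivity
  have hS : MemLp S (ENNReal.ofReal r) μ := hT.of_le_mul_add hSm.aestronglyMeasurable fun ω => by
    rw [norm_of_nonneg (hS0 ω)]
    exact biSup_le_mul_biSup_add (by positivity) (by norm_num)
      (fun k _ => omegaQ_one_nonneg (hZ0 k ω))
      fun k _ => le_inv_log_three_mul_omegaQ_one_add (hZ0 k ω)
  have hTS : ∀ ω, T ω ≤ (log 3 + log n) * S ω + (n : ℝ)⁻¹ := fun ω =>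
    biSup_le_mul_biSup_add (by positivity) (by positivity) (fun k _ => hZ0 k ω)
      fun k _ => omegaQ_one_le_mul_add (by norm_cast; omega) (hZ0 k ω)
  calc (∫ ω, T ω ^ r ∂μ) ^ (1 / r)
      ≤ (log 3 + log n) * (∫ ω, S ω ^ r ∂μ) ^ (1 / r) + (n : ℝ)⁻¹ :=
        integral_rpow_rpow_one_div_le_mul_add hr hTm.aestronglyMeasurable hT0 hS hS0
          (by positivity) (by positivity) hTS
    _ ≤ 3 * log n * (C * (n : ℝ) ^ (-(1 : ℝ) / 2)) + 2 * (n : ℝ) ^ (-(1 : ℝ) / 2) * log n :=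
        add_le_add (mul_le_mul (log_three_add_log_le hn) hbound
          (rpow_nonneg (integral_nonneg fun ω => rpow_nonneg (hS0 ω) r) _) (by positivity))
          (inv_le_two_mul_rpow_neg_half_mul_log hn)
    _ = (3 * C + 2) * (n : ℝ) ^ (-(1 : ℝ) / 2) * log n := by ring
end

section
/- Let (B_t)_{t≥0} be a standard Brownian motion. Then for every p ∈ [1, ∞), E[( sup_{0 ≤ s < t ≤ 1} |B_t − B_s| / ω_{1/2}(t − s) )^p] < ∞. -/
/-!
Normalise the increment of `B` over the dyadic interval `[k 2⁻ⁿ, (k + 1) 2⁻ⁿ]` by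
`levyWeight n = √((n + 1) 2⁻ⁿ)`, and let `Z = levyDyadicSup B` be their supremum.
For a continuous path, chaining `s` and `t` through their dyadic approximations at the level
`2⁻ᵐ ≈ t - s` bounds `|B t - B s| / ω_{1/2}(t - s)` by `51 Z`: the weights decay geometrically,
so the chain costs a bounded multiple of `levyWeight m`, which is comparable to `ω_{1/2}(t - s)`.

Each normalised increment `W` is centred Gaussian with variance `1 / (n + 1)`, so `W > 2` has
probability at most `2 e^{-2(n+1)}`, and by Cauchy–Schwarz `E[W^p; W > 2] = O(e^{-(n+1)})`, which
is summable against the `2ⁿ` increments of level `n`. Hence `E[Z^p] ≤ 2^p + ∑ E[W^p; W > 2] < ∞`.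
-/

open MeasureTheory ProbabilityTheory
open scoped ENNReal

/-- `B` is a standard Brownian motion on the probability space `(Ω, P)`: each `B t` is
measurable, almost every sample path is continuous on `[0,∞)`, `B 0 = 0` a.s., each
increment `B t - B s` (for `0 ≤ s ≤ t`) is Gaussian with mean `0` and variance `t - s`,
and increments over consecutive intervals are independent. -/
def IsStdBM {Ω : Type*} [MeasurableSpace Ω] (P : Measure Ω) (B : ℝ → Ω → ℝ) : Prop :=
  (∀ t : ℝ, Measurable (B t)) ∧
  (∀ᵐ ω ∂P, ContinuousOn (fun t => B t ω) (Set.Ici (0:ℝ))) ∧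
  (∀ᵐ ω ∂P, B 0 ω = 0) ∧
  (∀ s t : ℝ, 0 ≤ s → s ≤ t →
    Measure.map (fun ω => B t ω - B s ω) P = gaussianReal 0 (Real.toNNReal (t - s))) ∧
  (∀ u : ℕ → ℝ, (∀ i, 0 ≤ u i) → Monotone u →
    iIndepFun (fun i ω => B (u (i+1)) ω - B (u i) ω) P)

open Set Filter Topology

lemma Nat.floor_two_mul_eq_or {y : ℝ} (hy : 0 ≤ y) :
    ⌊2 * y⌋₊ = 2 * ⌊y⌋₊ ∨ ⌊2 * y⌋₊ = 2 * ⌊y⌋₊ + 1 := by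
  have hlo : 2 * ⌊y⌋₊ ≤ ⌊2 * y⌋₊ := Nat.le_floor <| by
    push_cast
    linarith [Nat.floor_le hy]
  have hhi : ⌊2 * y⌋₊ < 2 * ⌊y⌋₊ + 2 := (Nat.floor_lt (by positivity)).2 <| by
    push_cast
    linarith [Nat.lt_floor_add_one y]
  omega

noncomputable def dyadicFloor (n : ℕ) (x : ℝ) : ℝ := ⌊x * 2 ^ n⌋₊ / 2 ^ n

lemma dyadicFloor_mem_Icc {x : ℝ} (hx : 0 ≤ x) (n : ℕ) :
    dyadicFloor n x ∈ Icc (x - (2 ^ n)⁻¹) x := by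
  have h2n : (0 : ℝ) < 2 ^ n := by positivity
  constructor
  · rw [dyadicFloor, le_div_iff₀ h2n, sub_mul, inv_mul_cancel₀ h2n.ne']
    linarith [Nat.lt_floor_add_one (x * 2 ^ n)]
  · rw [dyadicFloor, div_le_iff₀ h2n]
    exact Nat.floor_le (by positivity)

lemma dyadicFloor_nonneg (n : ℕ) (x : ℝ) : 0 ≤ dyadicFloor n x := by
  unfold dyadicFloor; positivity

lemma tendsto_dyadicFloor {x : ℝ} (hx : 0 ≤ x) :
    Tendsto (dyadicFloor · x) atTop (𝓝 x) := by
  have h : Tendsto (fun n : ℕ => x - (2 ^ n)⁻¹) atTop (𝓝 x) := by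
    simpa using tendsto_const_nhds.sub (tendsto_inv_atTop_zero.comp
      (tendsto_pow_atTop_atTop_of_one_lt (by norm_num : (1 : ℝ) < 2)))
  exact tendsto_of_tendsto_of_tendsto_of_le_of_le h tendsto_const_nhds
    (fun n => (dyadicFloor_mem_Icc hx n).1) (fun n => (dyadicFloor_mem_Icc hx n).2)

def DyadicIncrementsLE (f : ℝ → ℝ) (b : ℕ → ℝ) : Prop :=
  ∀ n k : ℕ, k < 2 ^ n → |f ((k + 1) / 2 ^ n) - f (k / 2 ^ n)| ≤ b n

namespace DyadicIncrementsLE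

variable {f : ℝ → ℝ} {b : ℕ → ℝ}

lemma nonneg (h : DyadicIncrementsLE f b) (n : ℕ) : 0 ≤ b n :=
  (abs_nonneg _).trans (h n 0 (by positivity))

lemma abs_sub_dyadicFloor_succ_le (h : DyadicIncrementsLE f b) {x : ℝ}
    (hx : x ∈ Icc (0 : ℝ) 1) (n : ℕ) :
    |f (dyadicFloor (n + 1) x) - f (dyadicFloor n x)| ≤ b (n + 1) := by
  have h2n : (0 : ℝ) < 2 ^ n := by positivity
  have hcoarse : dyadicFloor n x = ((2 * ⌊x * 2 ^ n⌋₊ : ℕ) : ℝ) / 2 ^ (n + 1) := by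
    rw [dyadicFloor, pow_succ]; push_cast; field_simp
  have hfine : ⌊x * 2 ^ (n + 1)⌋₊ = ⌊2 * (x * 2 ^ n)⌋₊ := by ring_nf
  rcases Nat.floor_two_mul_eq_or (by have := hx.1; positivity : 0 ≤ x * 2 ^ n) with he | he
  · rw [dyadicFloor, hfine, he, hcoarse, sub_self, abs_zero]
    exact h.nonneg _
  · have hlt : 2 * ⌊x * 2 ^ n⌋₊ < 2 ^ (n + 1) := by
      have : ⌊x * 2 ^ (n + 1)⌋₊ ≤ 2 ^ (n + 1) := Nat.floor_le_of_le <| by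
        push_cast; nlinarith [hx.2, pow_pos (by norm_num : (0 : ℝ) < 2) (n + 1)]
      omega
    rw [dyadicFloor, hfine, he, hcoarse]
    exact_mod_cast h (n + 1) _ hlt

lemma abs_sub_dyadicFloor_le (h : DyadicIncrementsLE f b) (hf : ContinuousOn f (Icc 0 1))
    {m : ℕ} {T : ℝ} (hT : ∀ N, ∑ n ∈ Finset.Ico m N, b (n + 1) ≤ T) {x : ℝ}
    (hx : x ∈ Icc (0 : ℝ) 1) :
    |f x - f (dyadicFloor m x)| ≤ T := by
  have hmem : ∀ n, dyadicFloor n x ∈ Icc (0 : ℝ) 1 := fun n =>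
    ⟨dyadicFloor_nonneg n x, (dyadicFloor_mem_Icc hx.1 n).2.trans hx.2⟩
  have hlim : Tendsto (fun N => f (dyadicFloor N x)) atTop (𝓝 (f x)) :=
    (hf x hx).tendsto.comp (tendsto_nhdsWithin_iff.2
      ⟨tendsto_dyadicFloor hx.1, Eventually.of_forall hmem⟩)
  have hchain : ∀ᶠ N in atTop, dist (f (dyadicFloor m x)) (f (dyadicFloor N x)) ≤ T :=
    eventually_atTop.2 ⟨m, fun N hN =>
      (dist_le_Ico_sum_of_dist_le (f := fun n => f (dyadicFloor n x)) hN fun _ _ => by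
      rw [Real.dist_eq, abs_sub_comm]
      exact h.abs_sub_dyadicFloor_succ_le hx _).trans (hT N)⟩
  rw [abs_sub_comm, ← Real.dist_eq]
  exact le_of_tendsto (tendsto_const_nhds.dist hlim) hchain

lemma abs_sub_dyadicFloor_dyadicFloor_le (h : DyadicIncrementsLE f b) {s t : ℝ} {m : ℕ}
    (hs : 0 ≤ s) (hst : s ≤ t) (ht : t ≤ 1) (hm : t - s ≤ (2 ^ m)⁻¹) :
    |f (dyadicFloor m t) - f (dyadicFloor m s)| ≤ b m := by
  have h2m : (0 : ℝ) < 2 ^ m := by positivity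
  have hlo : ⌊s * 2 ^ m⌋₊ ≤ ⌊t * 2 ^ m⌋₊ := Nat.floor_le_floor (by gcongr)
  have hhi : ⌊t * 2 ^ m⌋₊ ≤ ⌊s * 2 ^ m⌋₊ + 1 := by
    rw [← Nat.floor_add_one (by positivity)]
    refine Nat.floor_le_floor ?_
    have := mul_le_mul_of_nonneg_right hm h2m.le
    rw [inv_mul_cancel₀ h2m.ne'] at this
    linarith
  obtain he | he : ⌊t * 2 ^ m⌋₊ = ⌊s * 2 ^ m⌋₊ ∨ ⌊t * 2 ^ m⌋₊ = ⌊s * 2 ^ m⌋₊ + 1 := by omega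
  · rw [dyadicFloor, dyadicFloor, he, sub_self, abs_zero]
    exact h.nonneg m
  · have hlt : ⌊s * 2 ^ m⌋₊ < 2 ^ m := by
      have : ⌊t * 2 ^ m⌋₊ ≤ 2 ^ m := Nat.floor_le_of_le <| by push_cast; nlinarith
      omega
    rw [dyadicFloor, dyadicFloor, he]
    exact_mod_cast h m _ hlt

lemma abs_sub_le (h : DyadicIncrementsLE f b) (hf : ContinuousOn f (Icc 0 1)) {m : ℕ} {T : ℝ}
    (hT : ∀ N, ∑ n ∈ Finset.Ico m N, b (n + 1) ≤ T) {s t : ℝ}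
    (hs : 0 ≤ s) (hst : s ≤ t) (ht : t ≤ 1) (hm : t - s ≤ (2 ^ m)⁻¹) :
    |f t - f s| ≤ b m + 2 * T := by
  have h1 := h.abs_sub_dyadicFloor_le hf hT ⟨hs.trans hst, ht⟩
  have h2 := h.abs_sub_dyadicFloor_le hf hT ⟨hs, hst.trans ht⟩
  have h3 := h.abs_sub_dyadicFloor_dyadicFloor_le hs hst ht hm
  calc |f t - f s|
      ≤ |f t - f (dyadicFloor m t)| + |f (dyadicFloor m t) - f (dyadicFloor m s)|
          + |f s - f (dyadicFloor m s)| := by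
        rw [abs_sub_comm (f s)]
        linarith [_root_.abs_sub_le (f t) (f (dyadicFloor m t)) (f s),
          _root_.abs_sub_le (f (dyadicFloor m t)) (f (dyadicFloor m s)) (f s)]
    _ ≤ b m + 2 * T := by linarith

end DyadicIncrementsLE

noncomputable def levyWeight (n : ℕ) : ℝ := √((n + 1) / 2 ^ n)

lemma levyWeight_pos (n : ℕ) : 0 < levyWeight n := Real.sqrt_pos.2 (by positivity)

lemma levyWeight_succ_le (n : ℕ) : levyWeight (n + 1) ≤ levyWeight n := by
  refine Real.sqrt_le_sqrt ?_
  rw [div_le_div_iff₀ (by positivity) (by positivity), pow_succ]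
  push_cast
  nlinarith [pow_pos (by norm_num : (0 : ℝ) < 2) n]

lemma levyWeight_add_two_le (n : ℕ) : levyWeight (n + 2) ≤ 7 / 8 * levyWeight (n + 1) := by
  rw [levyWeight, levyWeight, ← Real.sqrt_sq (by norm_num : (0 : ℝ) ≤ 7 / 8),
    ← Real.sqrt_mul (by positivity)]
  refine Real.sqrt_le_sqrt ?_
  rw [mul_div_assoc', div_le_div_iff₀ (by positivity) (by positivity), pow_succ _ (n + 1)]
  push_cast
  nlinarith [pow_pos (by norm_num : (0 : ℝ) < 2) (n + 1)]

-- `levyWeight (n + 1) ≤ 8 * (levyWeight (n + 1) - levyWeight (n + 2))`, so the sum telescopes.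
lemma sum_Ico_levyWeight_le (m N : ℕ) :
    ∑ n ∈ Finset.Ico m N, levyWeight (n + 1) ≤ 8 * levyWeight m := by
  have key : ∀ N, m ≤ N → ∑ n ∈ Finset.Ico m N, levyWeight (n + 1) + 8 * levyWeight (N + 1)
      ≤ 8 * levyWeight (m + 1) := by
    intro N hN
    induction N, hN using Nat.le_induction with
    | base => simp
    | succ N hmN ih =>
      rw [Finset.sum_Ico_succ_top hmN]
      linarith [levyWeight_add_two_le N]
  rcases le_total m N with hmN | hNm
  · linarith [key N hmN, levyWeight_pos (N + 1), levyWeight_succ_le m]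
  · rw [Finset.Ico_eq_empty_of_le hNm, Finset.sum_empty]
    exact mul_nonneg (by norm_num) (levyWeight_pos m).le

lemma log_three_le_ell {δ : ℝ} (hδ : 0 < δ) : Real.log 3 ≤ ell δ := by
  unfold ell
  split_ifs with h
  · rw [← Real.log_inv]
    exact Real.log_le_log (by norm_num) ((le_inv_comm₀ (by norm_num) hδ).2 (by linarith))
  · exact le_rfl

lemma neg_log_le_ell {δ : ℝ} (hδ : 0 < δ) : -Real.log δ ≤ ell δ := by
  unfold ell
  split_ifs with h
  · exact le_rfl
  · rw [← Real.log_inv]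
    exact Real.log_le_log (by positivity) (by rw [inv_le_comm₀ hδ (by norm_num)]; linarith)

lemma omegaQ_half_eq_sqrt {δ : ℝ} (hδ : 0 < δ) : omegaQ (1 / 2) δ = √(δ * ell δ) := by
  rw [omegaQ, if_neg hδ.ne', Real.sqrt_eq_rpow]

lemma omegaQ_half_pos {δ : ℝ} (hδ : 0 < δ) : 0 < omegaQ (1 / 2) δ := by
  rw [omegaQ_half_eq_sqrt hδ]
  exact Real.sqrt_pos.2 (mul_pos hδ ((Real.log_pos (by norm_num)).trans_le (log_three_le_ell hδ)))

lemma exists_dyadic_scale {δ : ℝ} (hδ : 0 < δ) (hδ1 : δ ≤ 1) :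
    ∃ m : ℕ, (2 ^ (m + 1) : ℝ)⁻¹ < δ ∧ δ ≤ (2 ^ m)⁻¹ := by
  obtain ⟨m, hlo, hhi⟩ :=
    exists_nat_pow_near ((one_le_inv₀ hδ).2 hδ1) (by norm_num : (1 : ℝ) < 2)
  exact ⟨m, (inv_lt_comm₀ (by positivity) hδ).2 hhi, (le_inv_comm₀ hδ (by positivity)).2 hlo⟩

lemma levyWeight_le_omegaQ {δ : ℝ} {m : ℕ} (hδ : 0 < δ) (hlo : (2 ^ (m + 1) : ℝ)⁻¹ < δ)
    (hhi : δ ≤ (2 ^ m)⁻¹) : levyWeight m ≤ 3 * omegaQ (1 / 2) δ := by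
  have hlog2 := Real.log_two_gt_d9
  have hm : (m + 1) * Real.log 2 ≤ 2 * ell δ := by
    have h1 : m * Real.log 2 ≤ -Real.log δ := by
      rw [← Real.log_pow, le_neg, ← Real.log_inv]
      exact Real.log_le_log hδ hhi
    have h2 : Real.log 2 ≤ Real.log 3 := Real.log_le_log (by norm_num) (by norm_num)
    linarith [neg_log_le_ell hδ, log_three_le_ell hδ]
  have hpow : (2 ^ m : ℝ)⁻¹ < 2 * δ := by
    rw [pow_succ, mul_inv] at hlo
    linarith
  rw [omegaQ_half_eq_sqrt hδ, levyWeight, ← Real.sqrt_sq (by norm_num : (0 : ℝ) ≤ 3),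
    ← Real.sqrt_mul (by positivity)]
  refine Real.sqrt_le_sqrt ?_
  have hell : 0 ≤ ell δ := (Real.log_nonneg (by norm_num)).trans (log_three_le_ell hδ)
  rw [div_eq_mul_inv]
  calc ((m : ℝ) + 1) * (2 ^ m)⁻¹ ≤ (2 * ell δ / Real.log 2) * (2 * δ) := by
        refine mul_le_mul ?_ hpow.le (by positivity) (by positivity)
        rw [le_div_iff₀ (by linarith)]
        exact hm
    _ ≤ 3 ^ 2 * (δ * ell δ) := by
        rw [div_mul_eq_mul_div, div_le_iff₀ (by linarith)]
        nlinarith [mul_nonneg hδ.le hell]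

namespace DyadicIncrementsLE

variable {f : ℝ → ℝ}

-- `51 = 17 * 3`: `17 = 1 + 2 * 8` from chaining with the geometric tail of `levyWeight`, and `3`
-- compares `levyWeight m` with `ω_{1/2}` at the scale `2⁻ᵐ` of `t - s`.
lemma abs_sub_le_omegaQ {Y : ℝ} (h : DyadicIncrementsLE f (Y * levyWeight ·))
    (hf : ContinuousOn f (Icc 0 1)) {s t : ℝ} (hs : 0 ≤ s) (hst : s < t) (ht : t ≤ 1) :
    |f t - f s| ≤ 51 * Y * omegaQ (1 / 2) (t - s) := by
  have hY : 0 ≤ Y := by simpa [levyWeight] using h.nonneg 0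
  obtain ⟨m, hlo, hhi⟩ := exists_dyadic_scale (sub_pos.2 hst) (by linarith)
  have hT : ∀ N, ∑ n ∈ Finset.Ico m N, Y * levyWeight (n + 1) ≤ 8 * (Y * levyWeight m) := by
    intro N
    rw [← Finset.mul_sum, mul_left_comm]
    exact mul_le_mul_of_nonneg_left (sum_Ico_levyWeight_le m N) hY
  calc |f t - f s| ≤ Y * levyWeight m + 2 * (8 * (Y * levyWeight m)) :=
        h.abs_sub_le hf hT hs hst.le ht hhi
    _ = 17 * (Y * levyWeight m) := by ring
    _ ≤ 17 * (Y * (3 * omegaQ (1 / 2) (t - s))) := by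
        gcongr
        exact levyWeight_le_omegaQ (sub_pos.2 hst) hlo hhi
    _ = 51 * Y * omegaQ (1 / 2) (t - s) := by ring

end DyadicIncrementsLE

noncomputable def levyDyadicSup (f : ℝ → ℝ) : ℝ≥0∞ :=
  ⨆ i : Σ n : ℕ, Fin (2 ^ n),
    ENNReal.ofReal (|f ((i.2 + 1) / 2 ^ i.1) - f (i.2 / 2 ^ i.1)| / levyWeight i.1)

lemma iSup_ofReal_div_omegaQ_le {f : ℝ → ℝ} (hf : ContinuousOn f (Icc 0 1)) :
    ⨆ (s : ℝ) (t : ℝ) (_ : 0 ≤ s) (_ : s < t) (_ : t ≤ 1),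
        ENNReal.ofReal (|f t - f s| / omegaQ (1 / 2) (t - s)) ≤ 51 * levyDyadicSup f := by
  set S := levyDyadicSup f
  rcases eq_or_ne S ⊤ with hS | hS
  · simp [hS]
  have h : DyadicIncrementsLE f (S.toReal * levyWeight ·) := by
    intro n k hk
    rw [← div_le_iff₀ (levyWeight_pos n), ← ENNReal.ofReal_le_iff_le_toReal hS]
    exact le_iSup (fun i : Σ n : ℕ, Fin (2 ^ n) => ENNReal.ofReal
      (|f ((i.2 + 1) / 2 ^ i.1) - f (i.2 / 2 ^ i.1)| / levyWeight i.1)) ⟨n, k, hk⟩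
  refine iSup₂_le fun s t => iSup₂_le fun hs hst => iSup_le fun ht => ?_
  calc ENNReal.ofReal (|f t - f s| / omegaQ (1 / 2) (t - s))
      ≤ ENNReal.ofReal (51 * S.toReal) := by
        refine ENNReal.ofReal_le_ofReal ((div_le_iff₀ (omegaQ_half_pos (sub_pos.2 hst))).2 ?_)
        exact h.abs_sub_le_omegaQ hf hs hst ht
    _ = 51 * S := by
        rw [ENNReal.ofReal_mul (by norm_num), ENNReal.ofReal_toReal hS, ENNReal.ofReal_ofNat]

section Gaussian

open Real
open scoped NNReal

lemma hasSubgaussianMGF_id_gaussianReal (v : ℝ≥0) : HasSubgaussianMGF id v (gaussianReal 0 v) :=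
  ⟨integrable_exp_mul_gaussianReal, fun t => by simp [mgf_id_gaussianReal]⟩

lemma gaussianReal_abs_ge_le (v : ℝ≥0) {ε : ℝ} (hε : 0 ≤ ε) :
    gaussianReal 0 v {x | ε ≤ |x|} ≤ 2 * ENNReal.ofReal (exp (-ε ^ 2 / (2 * v))) := by
  have tail : ∀ X : ℝ → ℝ, HasSubgaussianMGF X v (gaussianReal 0 v) →
      gaussianReal 0 v {x | ε ≤ X x} ≤ ENNReal.ofReal (exp (-ε ^ 2 / (2 * v))) := by
    intro X hX
    rw [← ofReal_measureReal]
    exact ENNReal.ofReal_le_ofReal (hX.measure_ge_le hε)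
  calc gaussianReal 0 v {x | ε ≤ |x|}
      ≤ gaussianReal 0 v ({x | ε ≤ id x} ∪ {x | ε ≤ (-id) x}) :=
        measure_mono fun x hx => by
          rcases le_abs'.1 (show ε ≤ |x| from hx) with h | h
          · exact Or.inr (show ε ≤ -x by linarith)
          · exact Or.inl h
    _ ≤ _ := (measure_union_le _ _).trans (by
        rw [two_mul]
        exact add_le_add (tail _ (hasSubgaussianMGF_id_gaussianReal v))
          (tail _ (hasSubgaussianMGF_id_gaussianReal v).neg))

lemma lintegral_gaussianReal_eq_lintegral_sqrt_mul {g : ℝ → ℝ≥0∞} (hg : Measurable g)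
    (v : ℝ≥0) :
    ∫⁻ x, g x ∂gaussianReal 0 v = ∫⁻ y, g (√v * y) ∂gaussianReal 0 1 := by
  have hmap : (gaussianReal 0 1).map (√v * ·) = gaussianReal 0 v := by
    rw [gaussianReal_map_const_mul, mul_zero]
    congr 1
    ext
    simp [Real.sq_sqrt]
  rw [← hmap, lintegral_map hg (by fun_prop)]

lemma lintegral_enorm_rpow_gaussianReal_lt_top {q : ℝ} (hq : 0 < q) :
    ∫⁻ y, ‖y‖ₑ ^ q ∂gaussianReal 0 1 < ⊤ := by
  simpa [ENNReal.toReal_ofReal hq.le] using lintegral_rpow_enorm_lt_top_of_eLpNorm_lt_top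
    (by simpa using hq) ENNReal.ofReal_ne_top
    (memLp_id_gaussianReal' (μ := 0) (v := 1) (.ofReal q) ENNReal.ofReal_ne_top).eLpNorm_lt_top

lemma lintegral_gaussianReal_indicator_rpow_le (v : ℝ≥0) {σ c p : ℝ} (hσ : 0 < σ)
    (hvσ : (v : ℝ) ≤ σ ^ 2) (hc : 0 ≤ c) (hp : 0 < p) :
    ∫⁻ x, (Ioi (ENNReal.ofReal c)).indicator (· ^ p) (ENNReal.ofReal (|x| / σ))
        ∂gaussianReal 0 v
      ≤ (2 * ∫⁻ y, ‖y‖ₑ ^ (2 * p) ∂gaussianReal 0 1) ^ (1 / 2 : ℝ) *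
        ENNReal.ofReal (exp (-(c * σ) ^ 2 / (4 * v))) := by
  set w : ℝ → ℝ≥0∞ := fun x => ENNReal.ofReal (|x| / σ)
  set A : Set ℝ := {x | c * σ ≤ |x|}
  have hA : MeasurableSet A := measurableSet_le measurable_const (by fun_prop)
  have hsplit : ∀ x, (Ioi (ENNReal.ofReal c)).indicator (· ^ p) (w x)
      ≤ w x ^ p * A.indicator 1 x := fun x => by
    by_cases hx : ENNReal.ofReal c < w x
    · have : c < |x| / σ := (ENNReal.ofReal_lt_ofReal_iff'.1 hx).1
      have hxA : x ∈ A := le_of_lt (by rwa [lt_div_iff₀ hσ] at this)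
      simp [Set.indicator_of_mem (show w x ∈ Ioi (ENNReal.ofReal c) from hx), hxA]
    · simp [Set.indicator_of_notMem (show w x ∉ Ioi (ENNReal.ofReal c) from hx)]
  have hmoment : ∫⁻ x, (w x ^ p) ^ (2 : ℝ) ∂gaussianReal 0 v
      ≤ ∫⁻ y, ‖y‖ₑ ^ (2 * p) ∂gaussianReal 0 1 := by
    simp_rw [← ENNReal.rpow_mul, mul_comm p]
    rw [lintegral_gaussianReal_eq_lintegral_sqrt_mul (by fun_prop)]
    refine lintegral_mono fun y => ENNReal.rpow_le_rpow ?_ (by positivity)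
    simp only [w]
    rw [Real.enorm_eq_ofReal_abs, abs_mul, abs_of_nonneg (Real.sqrt_nonneg _), mul_div_right_comm]
    refine ENNReal.ofReal_le_ofReal (mul_le_of_le_one_left (abs_nonneg y) ?_)
    rw [div_le_one hσ]
    exact (Real.sqrt_le_left hσ.le).2 hvσ
  have htail : ∫⁻ x, (A.indicator 1 x) ^ (2 : ℝ) ∂gaussianReal 0 v
      ≤ 2 * ENNReal.ofReal (exp (-(c * σ) ^ 2 / (2 * v))) := by
    have hsq (x : ℝ) : (A.indicator (1 : ℝ → ℝ≥0∞) x) ^ (2 : ℝ) = A.indicator 1 x := by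
      by_cases hx : x ∈ A <;> simp [hx]
    simp_rw [hsq]
    rw [lintegral_indicator_one hA]
    exact gaussianReal_abs_ge_le v (by positivity)
  calc _ ≤ ∫⁻ x, w x ^ p * A.indicator 1 x ∂gaussianReal 0 v := lintegral_mono hsplit
    _ ≤ (∫⁻ x, (w x ^ p) ^ (2 : ℝ) ∂gaussianReal 0 v) ^ (1 / 2 : ℝ) *
          (∫⁻ x, (A.indicator 1 x) ^ (2 : ℝ) ∂gaussianReal 0 v) ^ (1 / 2 : ℝ) :=
        ENNReal.lintegral_mul_le_Lp_mul_Lq _ Real.HolderConjugate.two_two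
          (f := fun x => w x ^ p) (by fun_prop) (measurable_const.indicator hA).aemeasurable
    _ ≤ (∫⁻ y, ‖y‖ₑ ^ (2 * p) ∂gaussianReal 0 1) ^ (1 / 2 : ℝ) *
          (2 * ENNReal.ofReal (exp (-(c * σ) ^ 2 / (2 * v)))) ^ (1 / 2 : ℝ) := by
        gcongr
    _ = _ := by
        rw [ENNReal.mul_rpow_of_nonneg _ _ (by norm_num),
          ENNReal.mul_rpow_of_nonneg _ _ (by norm_num),
          ENNReal.ofReal_rpow_of_nonneg (exp_nonneg _) (by norm_num), ← Real.exp_mul]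
        ring_nf

lemma rpow_iSup_le_add_tsum_indicator {ι : Type*} (W : ι → ℝ≥0∞) (c : ℝ≥0∞) {p : ℝ}
    (hp : 0 < p) : (⨆ i, W i) ^ p ≤ c ^ p + ∑' i, (Ioi c).indicator (· ^ p) (W i) := by
  rw [← ENNReal.orderIsoRpow_apply p hp, OrderIso.map_iSup]
  refine iSup_le fun i => ?_
  rw [ENNReal.orderIsoRpow_apply]
  by_cases hi : c < W i
  · calc W i ^ p = (Ioi c).indicator (· ^ p) (W i) :=
          (Set.indicator_of_mem (show W i ∈ Ioi c from hi) (· ^ p)).symm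
      _ ≤ _ := ENNReal.le_tsum i
      _ ≤ _ := le_add_self
  · exact (ENNReal.rpow_le_rpow (not_lt.1 hi) hp.le).trans le_self_add

theorem lintegral_rpow_iSup_abs_div_lt_top {Ω : Type*} [MeasurableSpace Ω] {P : Measure Ω}
    [IsProbabilityMeasure P] {ι : Type*} [Countable ι] {X : ι → Ω → ℝ} {v : ι → ℝ≥0}
    {σ : ι → ℝ} (hX : ∀ i, P.map (X i) = gaussianReal 0 (v i)) (hσ : ∀ i, 0 < σ i)
    (hvσ : ∀ i, (v i : ℝ) ≤ σ i ^ 2)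
    (hsum : ∑' i, ENNReal.ofReal (exp (-σ i ^ 2 / v i)) ≠ ⊤)
    {p : ℝ} (hp : 0 < p) :
    ∫⁻ ω, (⨆ i, ENNReal.ofReal (|X i ω| / σ i)) ^ p ∂P < ⊤ := by
  set M := (2 * ∫⁻ y, ‖y‖ₑ ^ (2 * p) ∂gaussianReal 0 1) ^ (1 / 2 : ℝ)
  have hM : M ≠ ⊤ := ENNReal.rpow_ne_top_of_nonneg (by norm_num) (ENNReal.mul_ne_top
    ENNReal.ofNat_ne_top (lintegral_enorm_rpow_gaussianReal_lt_top (by positivity)).ne)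
  set F : ι → ℝ → ℝ≥0∞ := fun i x =>
    (Ioi (ENNReal.ofReal 2)).indicator (· ^ p) (ENNReal.ofReal (|x| / σ i))
  have hF : ∀ i, Measurable (F i) := fun i =>
    ((measurable_id.pow_const p).indicator measurableSet_Ioi).comp (by fun_prop)
  have hXm : ∀ i, AEMeasurable (X i) P := fun i =>
    .of_map_ne_zero (by rw [hX i]; exact IsProbabilityMeasure.ne_zero _)
  have hterm (i : ι) : ∫⁻ ω, F i (X i ω) ∂P ≤ M * ENNReal.ofReal (exp (-σ i ^ 2 / v i)) := by
    rw [← lintegral_map' (hF i).aemeasurable (hXm i), hX i]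
    convert lintegral_gaussianReal_indicator_rpow_le (v i) (hσ i) (hvσ i) zero_le_two hp
      using 4
    ring
  calc ∫⁻ ω, (⨆ i, ENNReal.ofReal (|X i ω| / σ i)) ^ p ∂P
      ≤ ∫⁻ ω, ENNReal.ofReal 2 ^ p + ∑' i, F i (X i ω) ∂P :=
        lintegral_mono fun ω => rpow_iSup_le_add_tsum_indicator _ _ hp
    _ = ENNReal.ofReal 2 ^ p + ∑' i, ∫⁻ ω, F i (X i ω) ∂P := by
        rw [lintegral_add_left measurable_const, lintegral_const, measure_univ, mul_one,
          lintegral_tsum (f := fun i ω => F i (X i ω)) fun i => (hF i).comp_aemeasurable (hXm i)]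
    _ ≤ ENNReal.ofReal 2 ^ p + ∑' i, M * ENNReal.ofReal (exp (-σ i ^ 2 / v i)) := by
        gcongr with i
        exact hterm i
    _ < ⊤ := by
        rw [ENNReal.tsum_mul_left]
        exact ENNReal.add_lt_top.2 ⟨ENNReal.rpow_lt_top_of_nonneg hp.le ENNReal.ofReal_ne_top,
          ENNReal.mul_lt_top hM.lt_top hsum.lt_top⟩

lemma tsum_ofReal_exp_neg_succ_ne_top :
    ∑' i : Σ n : ℕ, Fin (2 ^ n), ENNReal.ofReal (exp (-(i.1 + 1))) ≠ ⊤ := by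
  rw [ENNReal.tsum_sigma']
  simp only [tsum_fintype, Finset.sum_const, Finset.card_univ, Fintype.card_fin, nsmul_eq_mul]
  have h2e : 2 * exp (-1) < 1 := by
    rw [Real.exp_neg, ← div_eq_mul_inv, div_lt_one (exp_pos 1)]
    linarith [Real.exp_one_gt_d9]
  refine ne_top_of_le_ne_top (tsum_geometric_lt_top.2 (ENNReal.ofReal_lt_one.2 h2e)).ne
    (ENNReal.tsum_le_tsum fun n => ?_)
  rw [ENNReal.ofReal_mul zero_le_two, ENNReal.ofReal_ofNat, mul_pow,
    ← ENNReal.ofReal_pow (exp_nonneg _), ← Real.exp_nat_mul]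
  gcongr
  · exact_mod_cast le_rfl
  · linarith

end Gaussian

lemma coe_toNNReal_dyadic_length (n k : ℕ) :
    (Real.toNNReal ((k + 1) / 2 ^ n - k / 2 ^ n) : ℝ) = (2 ^ n)⁻¹ := by
  rw [Real.coe_toNNReal _ (by rw [sub_nonneg]; gcongr; linarith)]
  ring

lemma levyWeight_sq (n : ℕ) : levyWeight n ^ 2 = (n + 1) / 2 ^ n :=
  Real.sq_sqrt (by positivity)

lemma lintegral_rpow_levyDyadicSup_lt_top {Ω : Type*} [MeasurableSpace Ω] {P : Measure Ω}
    [IsProbabilityMeasure P] {B : ℝ → Ω → ℝ}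
    (hlaw : ∀ s t : ℝ, 0 ≤ s → s ≤ t →
      P.map (fun ω => B t ω - B s ω) = gaussianReal 0 (Real.toNNReal (t - s)))
    {p : ℝ} (hp : 0 < p) :
    ∫⁻ ω, levyDyadicSup (B · ω) ^ p ∂P < ⊤ := by
  have hX (i : Σ n : ℕ, Fin (2 ^ n)) :
      P.map (fun ω => B ((i.2 + 1) / 2 ^ i.1) ω - B (i.2 / 2 ^ i.1) ω) =
        gaussianReal 0 (Real.toNNReal ((i.2 + 1) / 2 ^ i.1 - i.2 / 2 ^ i.1)) :=
    hlaw _ _ (by positivity) (by gcongr; linarith)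
  refine lintegral_rpow_iSup_abs_div_lt_top hX (fun i => levyWeight_pos i.1) (fun i => ?_) ?_ hp
  · rw [coe_toNNReal_dyadic_length, levyWeight_sq, div_eq_mul_inv]
    exact le_mul_of_one_le_left (by positivity) (by linarith [i.1.cast_nonneg (α := ℝ)])
  · refine ne_of_eq_of_ne (tsum_congr fun i => ?_) tsum_ofReal_exp_neg_succ_ne_top
    rw [coe_toNNReal_dyadic_length, levyWeight_sq, div_inv_eq_mul, neg_mul,
      div_mul_cancel₀ _ (by positivity)]

/-- for a standard Brownian motion `B`, for every `p ∈ [1,∞)`,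
`E[(sup_{0 ≤ s < t ≤ 1} |B_t - B_s| / ω_{1/2}(t-s))^p] < ∞`. -/
theorem brownian_holder_sup_moment {Ω : Type*} [MeasurableSpace Ω] (P : Measure Ω)
    [IsProbabilityMeasure P] (B : ℝ → Ω → ℝ) (hB : IsStdBM P B)
    (p : ℝ) (hp : 1 ≤ p) :
    ∫⁻ ω, (⨆ (s : ℝ) (t : ℝ) (_ : 0 ≤ s) (_ : s < t) (_ : t ≤ 1),
        ENNReal.ofReal (|B t ω - B s ω| / omegaQ (1/2) (t - s))) ^ p ∂P < ⊤ := by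
  obtain ⟨-, hcont, -, hlaw, -⟩ := hB
  have hp0 : 0 < p := by linarith
  have hdom : ∀ᵐ ω ∂P, (⨆ (s : ℝ) (t : ℝ) (_ : 0 ≤ s) (_ : s < t) (_ : t ≤ 1),
      ENNReal.ofReal (|B t ω - B s ω| / omegaQ (1/2) (t - s))) ≤ 51 * levyDyadicSup (B · ω) :=
    hcont.mono fun ω hω => iSup_ofReal_div_omegaQ_le (hω.mono Icc_subset_Ici_self)
  have h51 : (51 : ℝ≥0∞) ^ p ≠ ⊤ := ENNReal.rpow_ne_top_of_nonneg hp0.le ENNReal.ofNat_ne_top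
  calc _ ≤ ∫⁻ ω, 51 ^ p * levyDyadicSup (B · ω) ^ p ∂P := lintegral_mono_ae <| hdom.mono
        fun ω h => (ENNReal.rpow_le_rpow h hp0.le).trans_eq (ENNReal.mul_rpow_of_nonneg _ _ hp0.le)
    _ = 51 ^ p * ∫⁻ ω, levyDyadicSup (B · ω) ^ p ∂P := lintegral_const_mul' _ _ h51
    _ < ⊤ := ENNReal.mul_lt_top h51.lt_top (lintegral_rpow_levyDyadicSup_lt_top hlaw hp0)
end
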